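/- arXiv:1110.1849 — 2 statements merged into one kernel-verified Lean document; each statement's English description precedes it below -/
import Mathlib

section
/- Let Q be a finite connected quandle with its elements {1,2,…,n} naturally ordered and with profile {1, ℓ_1, ℓ_2, …, ℓ_k}, where 1 ≤ ℓ_1 < ℓ_2 < ⋯ < ℓ_k. Then the number of distinct quandle matrices in canonical form obtained from Q by reorderings (that is, the number of distinct quandle matrices obtained after reordering by μ, where μ ranges over all natural reorderings with respect to r_q for all q ∈ Q) is at most ℓ_1 ℓ_2 ⋯ ℓ_{k-1}. -/
/-- A quandle structure on a set `Q`: a binary operation `op` that is idempotent,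
right-invertible (each right translation `r_b : x ↦ x * b` is a bijection) and
right-distributive. -/
structure QuandleOp (Q : Type*) where
  op : Q → Q → Q
  op_self : ∀ a, op a a = a
  op_bijective : ∀ b, Function.Bijective fun a => op a b
  op_distrib : ∀ a b c, op (op a b) c = op (op a c) (op b c)

namespace QuandleOp

/-- The right translation `r_b : x ↦ x * b`, as a permutation of `Q`. -/
noncomputable def r {Q : Type*} (S : QuandleOp Q) (b : Q) : Equiv.Perm Q :=
  Equiv.ofBijective _ (S.op_bijective b)

/-- A quandle is connected if every element can be taken to every other element by a
finite composition of the maps `r_b` and their inverses, i.e. by an element of the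
subgroup of permutations generated by the `r_b`. -/
def Connected {Q : Type*} (S : QuandleOp Q) : Prop :=
  ∀ a b : Q, ∃ g ∈ Subgroup.closure (Set.range S.r), g a = b

end QuandleOp

/-- The element `n` of the quandle `{1, …, n}` modelled as `Fin n` (element `m`
corresponds to the index `m - 1`). -/
def theTop (n : ℕ) [NeZero n] : Fin n :=
  ⟨n - 1, Nat.sub_lt (Nat.pos_of_ne_zero (NeZero.ne n)) Nat.one_pos⟩

/-- `ν` is a natural reordering with respect to `r q`, realized by the presentation of
`r q` as the product of the disjoint cycles `(I s 0  I s 1 … I s (ℓ s - 1))` for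
`s = 0, …, k-1` together with the fixed point `(q)`, where `1 ≤ ℓ 0 ≤ ⋯ ≤ ℓ (k-1)`:
it sends `q` to the top element `n` (index `n - 1`) and sends the `t`-th entry of the
`s`-th cycle to the element with index `(ℓ 0 + ⋯ + ℓ (s-1)) + t`. -/
def IsNaturalReorderingWith {n : ℕ} (S : QuandleOp (Fin n)) (q : Fin n)
    (ν : Equiv.Perm (Fin n)) {k : ℕ} (ℓ : Fin k → ℕ)
    (I : (s : Fin k) → Fin (ℓ s) → Fin n) : Prop :=
  (ν q).val = n - 1 ∧
  (∀ s, 1 ≤ ℓ s) ∧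
  Monotone ℓ ∧
  (∑ s, ℓ s) = n - 1 ∧
  Function.Injective (fun p : (s : Fin k) × Fin (ℓ s) => I p.1 p.2) ∧
  (∀ (s : Fin k) (t : Fin (ℓ s)), I s t ≠ q) ∧
  (∀ (s : Fin k) (t : Fin (ℓ s)),
    S.op (I s t) q = I s ⟨(t.val + 1) % ℓ s, Nat.mod_lt _ (Nat.zero_lt_of_lt t.isLt)⟩) ∧
  (∀ (s : Fin k) (t : Fin (ℓ s)),
    (ν (I s t)).val = (∑ j ∈ Finset.Iio s, ℓ j) + t.val)

/-- `ν` is a natural reordering with respect to `r q` (for some presentation of `r q`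
as a product of disjoint cycles of weakly increasing lengths, together with `(q)`). -/
def IsNaturalReordering {n : ℕ} (S : QuandleOp (Fin n)) (q : Fin n)
    (ν : Equiv.Perm (Fin n)) : Prop :=
  ∃ (k : ℕ) (ℓ : Fin k → ℕ) (I : (s : Fin k) → Fin (ℓ s) → Fin n),
    IsNaturalReorderingWith S q ν ℓ I

/-- The elements of the quandle are naturally ordered with cycle lengths `ℓ`:
`r n` is decomposed into disjoint cycles in form (N), i.e. the identity reordering is a
natural reordering with respect to `r n` with cycle lengths `ℓ`.  (This also says that
the profile of the quandle is `{1, ℓ 0, …, ℓ (k-1)}`.) -/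
def NaturallyOrderedWith {n : ℕ} [NeZero n] (S : QuandleOp (Fin n)) {k : ℕ}
    (ℓ : Fin k → ℕ) : Prop :=
  ∃ I, IsNaturalReorderingWith S (theTop n) (Equiv.refl (Fin n)) ℓ I

/-- The elements of the quandle are naturally ordered (the quandle matrix is in
canonical form). -/
def NaturallyOrdered {n : ℕ} [NeZero n] (S : QuandleOp (Fin n)) : Prop :=
  ∃ (k : ℕ) (ℓ : Fin k → ℕ), NaturallyOrderedWith S ℓ

/-- The quandle operation (equivalently, the quandle matrix) obtained after reordering
the elements by the bijection `ν`: the new matrix has entry `ν (i * j)` in row `ν i`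
and column `ν j`. -/
def reorderedOp {n : ℕ} (S : QuandleOp (Fin n)) (ν : Equiv.Perm (Fin n)) :
    Fin n → Fin n → Fin n :=
  fun i j => ν (S.op (ν.symm i) (ν.symm j))

/-!
An inner automorphism `g` of the quandle turns a natural reordering with respect to `q` into one
with respect to `g q` giving the same matrix, so by connectedness it suffices to consider
reorderings with respect to `r n`. Such a reordering is determined by its presentation of `r n`
as a product of cycles, and since the cycle lengths are distinct, that presentation is form (N)
with each cycle rotated. Composing with a power of `r n` undoes the rotation of the last cycle,
so the matrix depends only on the rotations of the other cycles: `ℓ 0 ⋯ ℓ (k-2)` choices.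
-/

open Equiv Function Finset

namespace QuandleOp

variable {Q : Type*} (S : QuandleOp Q)

lemma map_op_of_mem_closure {g : Perm Q} (hg : g ∈ Subgroup.closure (Set.range S.r))
    (a b : Q) : g (S.op a b) = S.op (g a) (g b) := by
  induction hg using Subgroup.closure_induction generalizing a b with
  | mem x hx =>
    obtain ⟨c, rfl⟩ := hx
    exact S.op_distrib a b c
  | one => rfl
  | mul x y _ _ ihx ihy => simp only [Perm.mul_apply, ihy, ihx]
  | inv x _ ih =>
    apply x.injective
    simp only [ih, Perm.coe_inv, apply_symm_apply]

lemma r_apply_self (q : Q) : S.r q q = q := S.op_self q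

end QuandleOp

lemma reorderedOp_mul_of_mem_closure {n : ℕ} (S : QuandleOp (Fin n)) (μ : Perm (Fin n))
    {g : Perm (Fin n)} (hg : g ∈ Subgroup.closure (Set.range S.r)) :
    reorderedOp S (μ * g) = reorderedOp S μ := by
  funext i j
  simp only [reorderedOp, Perm.mul_def, symm_trans_apply, trans_apply,
    S.map_op_of_mem_closure hg, apply_symm_apply]

namespace IsNaturalReorderingWith

variable {n : ℕ} {S : QuandleOp (Fin n)} {q : Fin n} {ν ν' : Perm (Fin n)}
  {k k' : ℕ} {ℓ : Fin k → ℕ} {ℓ' : Fin k' → ℕ}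
  {I : (s : Fin k) → Fin (ℓ s) → Fin n} {I' : (s : Fin k') → Fin (ℓ' s) → Fin n}

lemma length_pos (h : IsNaturalReorderingWith S q ν ℓ I) (s : Fin k) : 0 < ℓ s :=
  h.2.1 s

lemma apply_center (h : IsNaturalReorderingWith S q ν ℓ I) : (ν q).val = n - 1 :=
  h.1

lemma monotone (h : IsNaturalReorderingWith S q ν ℓ I) : Monotone ℓ :=
  h.2.2.1

lemma sum_length (h : IsNaturalReorderingWith S q ν ℓ I) : ∑ s, ℓ s = n - 1 :=
  h.2.2.2.1

lemma injective (h : IsNaturalReorderingWith S q ν ℓ I) :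
    Injective fun p : (s : Fin k) × Fin (ℓ s) => I p.1 p.2 :=
  h.2.2.2.2.1

lemma ne_center (h : IsNaturalReorderingWith S q ν ℓ I) (s : Fin k) (t : Fin (ℓ s)) :
    I s t ≠ q :=
  h.2.2.2.2.2.1 s t

lemma op_center (h : IsNaturalReorderingWith S q ν ℓ I) (s : Fin k) (t : Fin (ℓ s)) :
    S.op (I s t) q = I s ⟨(t.val + 1) % ℓ s, Nat.mod_lt _ (h.length_pos s)⟩ :=
  h.2.2.2.2.2.2.1 s t

lemma val_apply (h : IsNaturalReorderingWith S q ν ℓ I) (s : Fin k) (t : Fin (ℓ s)) :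
    (ν (I s t)).val = (∑ j ∈ Iio s, ℓ j) + t.val :=
  h.2.2.2.2.2.2.2 s t

lemma eq_of_apply_eq (h : IsNaturalReorderingWith S q ν ℓ I) {s s' : Fin k}
    {t : Fin (ℓ s)} {t' : Fin (ℓ s')} (e : I s t = I s' t') : s = s' ∧ t.val = t'.val := by
  obtain ⟨rfl, ht⟩ := Sigma.mk.inj_iff.mp (h.injective (a₁ := ⟨s, t⟩) (a₂ := ⟨s', t'⟩) e)
  exact ⟨rfl, congrArg Fin.val (eq_of_heq ht)⟩

lemma pow_apply (h : IsNaturalReorderingWith S q ν ℓ I) (s : Fin k) (t : Fin (ℓ s))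
    (m : ℕ) :
    (S.r q ^ m) (I s t) = I s ⟨(t.val + m) % ℓ s, Nat.mod_lt _ (h.length_pos s)⟩ := by
  induction m with
  | zero => simp [Nat.mod_eq_of_lt t.isLt]
  | succ m ih =>
    rw [pow_succ', Perm.mul_apply, ih, QuandleOp.r, ofBijective_apply, h.op_center]
    simp [Nat.add_assoc]

/-- The cycles, together with `q`, exhaust `Fin n`, since their lengths add up to `n - 1`. -/
lemma exists_apply_eq (h : IsNaturalReorderingWith S q ν ℓ I) {x : Fin n} (hx : x ≠ q) :
    ∃ (s : Fin k) (t : Fin (ℓ s)), I s t = x := by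
  classical
  have hsub : univ.image (fun p : (s : Fin k) × Fin (ℓ s) => I p.1 p.2) ⊆ univ.erase q := by
    simpa [subset_iff] using fun _ s t hx => hx ▸ h.ne_center s t
  have hcard : (univ.erase q).card ≤ (univ.image fun p : (s : Fin k) × Fin (ℓ s) =>
      I p.1 p.2).card := by
    rw [card_image_of_injective _ h.injective, card_erase_of_mem (mem_univ q)]
    simp [h.sum_length]
  have hx' := eq_of_subset_of_card_le hsub hcard ▸ mem_erase.mpr ⟨hx, mem_univ x⟩
  simpa using hx'

lemma perm_eq (h : IsNaturalReorderingWith S q ν ℓ I)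
    (h' : IsNaturalReorderingWith S q ν' ℓ I) : ν = ν' := by
  ext x
  rcases eq_or_ne x q with rfl | hx
  · exact h.apply_center.trans h'.apply_center.symm
  · obtain ⟨s, t, rfl⟩ := h.exists_apply_eq hx
    exact (h.val_apply s t).trans (h'.val_apply s t).symm

lemma map_of_mem_closure (h : IsNaturalReorderingWith S q ν ℓ I) {g : Perm (Fin n)}
    (hg : g ∈ Subgroup.closure (Set.range S.r)) :
    IsNaturalReorderingWith S (g q) (ν * g⁻¹) ℓ fun s t => g (I s t) := by
  obtain ⟨hq, hpos, hmono, hsum, hinj, hne, hcyc, hval⟩ := h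
  refine ⟨by simpa using hq, hpos, hmono, hsum, fun p p' e => hinj (g.injective e),
    fun s t e => hne s t (g.injective e), fun s t => ?_, fun s t => by simpa using hval s t⟩
  rw [← S.map_op_of_mem_closure hg, hcyc]

lemma minimalPeriod_eq (h : IsNaturalReorderingWith S q ν ℓ I) (s : Fin k) (t : Fin (ℓ s)) :
    minimalPeriod (S.r q) (I s t) = ℓ s := by
  have hper : ∀ m, IsPeriodicPt (S.r q) m (I s t) ↔ ℓ s ∣ m := by
    intro m
    rw [IsPeriodicPt, IsFixedPt, Perm.iterate_eq_pow, h.pow_apply]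
    constructor
    · intro e
      have ht : (t.val + m) % ℓ s = (t.val + 0) % ℓ s := by
        simpa [Nat.mod_eq_of_lt t.isLt] using (h.eq_of_apply_eq e).2
      exact Nat.modEq_zero_iff_dvd.mp (Nat.ModEq.add_left_cancel' _ ht)
    · rintro ⟨m, rfl⟩
      simp [Nat.mod_eq_of_lt t.isLt]
  exact Nat.dvd_antisymm (isPeriodicPt_iff_minimalPeriod_dvd.mp ((hper _).mpr dvd_rfl))
    ((hper _).mp (isPeriodicPt_minimalPeriod _ _))

lemma length_eq_of_apply_eq (h : IsNaturalReorderingWith S q ν ℓ I)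
    (h' : IsNaturalReorderingWith S q ν' ℓ' I') {s : Fin k} {t : Fin (ℓ s)} {s' : Fin k'}
    {t' : Fin (ℓ' s')} (e : I s t = I' s' t') : ℓ s = ℓ' s' := by
  rw [← h.minimalPeriod_eq, ← h'.minimalPeriod_eq, e]

lemma index_eq_of_pow_apply_eq (h : IsNaturalReorderingWith S q ν ℓ I) {a b : Fin k}
    {t : Fin (ℓ a)} {t' : Fin (ℓ b)} {m : ℕ} (e : (S.r q ^ m) (I a t) = I b t') : a = b := by
  rw [h.pow_apply] at e
  exact (h.eq_of_apply_eq e).1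

lemma exists_pow_apply_eq (h : IsNaturalReorderingWith S q ν ℓ I) {s : Fin k}
    (u v : Fin (ℓ s)) : ∃ m, (S.r q ^ m) (I s u) = I s v := by
  refine ⟨v.val + ℓ s - u.val, ?_⟩
  rw [h.pow_apply]
  congr 1
  ext
  simp only
  rw [show u.val + (v.val + ℓ s - u.val) = v.val + ℓ s by omega, Nat.add_mod_right,
    Nat.mod_eq_of_lt v.isLt]

lemma exists_injective_length_eq (h : IsNaturalReorderingWith S q ν ℓ I)
    (h' : IsNaturalReorderingWith S q ν' ℓ' I') :
    ∃ σ : Fin k' → Fin k, Injective σ ∧ ∀ s, ℓ' s = ℓ (σ s) := by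
  have hfirst : ∀ s : Fin k', ∃ p : (s : Fin k) × Fin (ℓ s),
      I p.1 p.2 = I' s ⟨0, h'.length_pos s⟩ := fun s =>
    let ⟨a, u, hu⟩ := h.exists_apply_eq (h'.ne_center s _)
    ⟨⟨a, u⟩, hu⟩
  choose p hp using hfirst
  have hsame : ∀ {a b : Fin k'} {p₁ p₂ : (s : Fin k) × Fin (ℓ s)}, p₁.1 = p₂.1 →
      I p₁.1 p₁.2 = I' a ⟨0, h'.length_pos a⟩ → I p₂.1 p₂.2 = I' b ⟨0, h'.length_pos b⟩ →
      a = b := by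
    rintro a b ⟨s, u⟩ ⟨s', v⟩ rfl ha hb
    obtain ⟨m, hm⟩ := h.exists_pow_apply_eq u v
    rw [ha, hb] at hm
    exact h'.index_eq_of_pow_apply_eq hm
  exact ⟨fun s => (p s).1, fun a b e => hsame e (hp a) (hp b),
    fun s => (h.length_eq_of_apply_eq h' (hp s)).symm⟩

/-- Since `ℓ` is strictly monotone, the length-preserving injection of cycles is monotone,
hence the identity. -/
lemma card_eq_and_heq_length (hℓ : StrictMono ℓ) (h : IsNaturalReorderingWith S q ν ℓ I)
    (h' : IsNaturalReorderingWith S q ν' ℓ' I') : k' = k ∧ HEq ℓ' ℓ := by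
  obtain ⟨σ, hσ, hσℓ⟩ := h.exists_injective_length_eq h'
  obtain ⟨τ, hτ, -⟩ := h'.exists_injective_length_eq h
  obtain rfl : k' = k := le_antisymm
    (by simpa using Fintype.card_le_of_injective σ hσ)
    (by simpa using Fintype.card_le_of_injective τ hτ)
  have hσmono : Monotone σ := fun a b hab => by
    have := h'.monotone hab
    rwa [hσℓ, hσℓ, hℓ.le_iff_le] at this
  refine ⟨rfl, heq_of_eq (funext fun s => ?_)⟩
  rw [hσℓ, (hσmono.strictMono_of_injective hσ).apply_eq]

lemma exists_rotate (hℓ : Injective ℓ) (h : IsNaturalReorderingWith S q ν ℓ I)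
    {I' : (s : Fin k) → Fin (ℓ s) → Fin n} (h' : IsNaturalReorderingWith S q ν' ℓ I') :
    ∃ c : (s : Fin k) → Fin (ℓ s), ∀ s t, I' s t = I s (c s + t) := by
  have hfirst : ∀ s, ∃ u, I s u = I' s ⟨0, h.length_pos s⟩ := fun s => by
    obtain ⟨a, u, hu⟩ := h.exists_apply_eq (h'.ne_center s _)
    obtain rfl := hℓ (h.length_eq_of_apply_eq h' hu)
    exact ⟨u, hu⟩
  choose c hc using hfirst
  refine ⟨c, fun s t => ?_⟩
  have e := h'.pow_apply s ⟨0, h.length_pos s⟩ t.val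
  rw [← hc, h.pow_apply] at e
  convert e.symm using 2 <;> ext <;> simp [Fin.val_add, Nat.mod_eq_of_lt t.isLt]

/-- Composing with a power of `r q` rotates all cycles at once, so that any one cycle can be
brought to its original starting point. -/
lemma exists_rotate_eq_zero (h : IsNaturalReorderingWith S q ν ℓ I)
    {c : (s : Fin k) → Fin (ℓ s)} (h' : IsNaturalReorderingWith S q ν' ℓ fun s t => I s (c s + t))
    (s₀ : Fin k) :
    ∃ (c' : (s : Fin k) → Fin (ℓ s)) (ν'' : Perm (Fin n)), c' s₀ = ⟨0, h.length_pos s₀⟩ ∧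
      IsNaturalReorderingWith S q ν'' ℓ (fun s t => I s (c' s + t)) ∧
      reorderedOp S ν'' = reorderedOp S ν' := by
  set m := ℓ s₀ - c s₀
  have hg : S.r q ^ m ∈ Subgroup.closure (Set.range S.r) :=
    Subgroup.pow_mem _ (Subgroup.subset_closure (Set.mem_range_self q)) m
  have h'' := h'.map_of_mem_closure hg
  rw [Perm.pow_apply_eq_self_of_apply_eq_self (S.r_apply_self q)] at h''
  refine ⟨fun s => c s + ⟨m % ℓ s, Nat.mod_lt _ (h.length_pos s)⟩, _, ?_, ?_,
    reorderedOp_mul_of_mem_closure S ν' (inv_mem hg)⟩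
  · ext
    have := (c s₀).isLt
    simp [Fin.val_add, show c s₀ + m = ℓ s₀ by omega]
  · convert h'' using 3 with s t
    rw [h.pow_apply]
    congr 1
    ext
    simp [Fin.val_add, Nat.add_right_comm]

end IsNaturalReorderingWith

section Counting

variable {n k : ℕ} {S : QuandleOp (Fin n)} {q₀ : Fin n} {ν₀ : Perm (Fin n)}
  {ℓ : Fin k → ℕ} {I : (s : Fin k) → Fin (ℓ s) → Fin n}

/-- Connectedness moves `q` to `q₀` by an inner automorphism, which preserves being a natural
reordering and does not change the matrix. -/
lemma exists_rotate_of_isNaturalReordering (hconn : S.Connected) (hℓ : StrictMono ℓ)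
    (h : IsNaturalReorderingWith S q₀ ν₀ ℓ I) (s₀ : Fin k) {q : Fin n} {μ : Perm (Fin n)}
    (hμ : IsNaturalReordering S q μ) :
    ∃ (c : (s : Fin k) → Fin (ℓ s)) (ν : Perm (Fin n)), c s₀ = ⟨0, h.length_pos s₀⟩ ∧
      IsNaturalReorderingWith S q₀ ν ℓ (fun s t => I s (c s + t)) ∧
      reorderedOp S ν = reorderedOp S μ := by
  obtain ⟨k', ℓ', I', h'⟩ := hμ
  obtain ⟨g, hg, rfl⟩ := hconn q q₀
  have h'' := h'.map_of_mem_closure hg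
  obtain ⟨rfl, hℓ'⟩ := h.card_eq_and_heq_length hℓ h''
  obtain rfl := eq_of_heq hℓ'
  obtain ⟨c, hc⟩ := h.exists_rotate hℓ.injective h''
  obtain ⟨c', ν, hc's₀, hν, hνμ⟩ :=
    h.exists_rotate_eq_zero (c := c) (by simpa only [← hc] using h'') s₀
  exact ⟨c', ν, hc's₀, hν, hνμ.trans (reorderedOp_mul_of_mem_closure S μ (inv_mem hg))⟩

lemma ncard_reorderedOp_le_prod_erase (hconn : S.Connected) (hℓ : StrictMono ℓ)
    (h : IsNaturalReorderingWith S q₀ ν₀ ℓ I) (s₀ : Fin k) :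
    {f : Fin n → Fin n → Fin n |
        ∃ (μ : Perm (Fin n)) (q : Fin n), IsNaturalReordering S q μ ∧ f = reorderedOp S μ}.ncard
      ≤ ∏ s ∈ univ.erase s₀, ℓ s := by
  classical
  let shifts : Finset ((s : Fin k) → Fin (ℓ s)) :=
    Fintype.piFinset fun s => if s = s₀ then {⟨0, h.length_pos s⟩} else univ
  let matrix (c : (s : Fin k) → Fin (ℓ s)) : Fin n → Fin n → Fin n := reorderedOp S <|
    Classical.epsilon fun ν => IsNaturalReorderingWith S q₀ ν ℓ fun s t => I s (c s + t)
  have hsub : {f : Fin n → Fin n → Fin n | ∃ (μ : Perm (Fin n)) (q : Fin n),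
      IsNaturalReordering S q μ ∧ f = reorderedOp S μ} ⊆ ↑(shifts.image matrix) := by
    rintro _ ⟨μ, q, hμ, rfl⟩
    obtain ⟨c, ν, hc, hν, hνμ⟩ := exists_rotate_of_isNaturalReordering hconn hℓ h s₀ hμ
    rw [← hνμ]
    refine mem_image.mpr ⟨c, Fintype.mem_piFinset.mpr fun s => ?_, ?_⟩
    · split_ifs with hs
      · subst hs; simp [hc]
      · exact mem_univ _
    · have hspec := Classical.epsilon_spec (p := fun ν =>
        IsNaturalReorderingWith S q₀ ν ℓ fun s t => I s (c s + t)) ⟨ν, hν⟩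
      exact congrArg (reorderedOp S) (hspec.perm_eq hν)
  have hcard : shifts.card = ∏ s ∈ univ.erase s₀, ℓ s := by
    rw [Fintype.card_piFinset, ← mul_prod_erase _ _ (mem_univ s₀), if_pos rfl, card_singleton, one_mul]
    refine prod_congr rfl fun s hs => ?_
    simp [if_neg (ne_of_mem_erase hs)]
  calc _ ≤ (shifts.image matrix).card :=
        (Set.ncard_le_ncard hsub (finite_toSet _)).trans_eq (Set.ncard_coe_finset _)
    _ ≤ shifts.card := card_image_le
    _ = _ := hcard

end Counting

/-- Corollary `AtMost` of the paper: let the elements of a finite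
connected quandle on `{1,…,n}` be naturally ordered, with profile
`{1, ℓ 0, …, ℓ (k-1)}` where `1 ≤ ℓ 0 < ℓ 1 < ⋯ < ℓ (k-1)`.  Then the number of
distinct quandle matrices obtained by natural reorderings is at most
`ℓ 0 * ℓ 1 * ⋯ * ℓ (k-2)`. -/
theorem card_canonical_matrices_le
    {n k : ℕ} [NeZero n] (hk : 0 < k) (S : QuandleOp (Fin n)) (hconn : S.Connected)
    (ℓ : Fin k → ℕ) (hstrict : StrictMono ℓ) (hord : NaturallyOrderedWith S ℓ) :
    {f : Fin n → Fin n → Fin n |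
        ∃ (μ : Equiv.Perm (Fin n)) (q : Fin n),
          IsNaturalReordering S q μ ∧ f = reorderedOp S μ}.ncard
      ≤ ∏ j ∈ Finset.Iio (⟨k - 1, by omega⟩ : Fin k), ℓ j := by
  obtain ⟨I, h⟩ := hord
  have hlast : univ.erase (⟨k - 1, by omega⟩ : Fin k) = Iio ⟨k - 1, by omega⟩ := by
    ext s
    simp [Fin.ext_iff, Fin.lt_def]
    omega
  exact hlast ▸ ncard_reorderedOp_le_prod_erase hconn hstrict h _
end

section
/- Let Q be a connected quandle with n elements whose profile is {1, n-1}, i.e., for each q ∈ Q the permutation r_q is the product of a single cycle of length n-1 and the fixed point q. Then Q is latin: for every i ∈ Q the map l_i : Q → Q, l_i(x) = i*x, is a bijection. Equivalently, every row of the quandle matrix of Q contains all the elements of Q. -/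
/-!
Write `r_q` for the right translation by `q`; the profile `{1, n-1}` says that `q` is the only
fixed point of `r_q` and that `r_i` is one cycle on the other `n - 1` elements. Suppose
`i * x = i * y = z` with `x ≠ y`. Then `x, y ≠ i`, so `y = r_i^d x` for some `d`, and since
`r_i^d` is an automorphism, `r_z = r_{i*y} = r_i^d r_{i*x} r_i^{-d} = r_i^d r_z r_i^{-d}`.
Hence `r_i^d z` is fixed by `r_z`, so `r_i^d z = z`; as `z ≠ i` lies on the cycle of `r_i`,
this forces `r_i^d = 1`, i.e. `x = y`.
-/

namespace QuandleOp

variable {Q : Type*} (S : QuandleOp Q)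

lemma r_apply (b x : Q) : S.r b x = S.op x b := rfl

lemma r_op (a b : Q) : S.r (S.op a b) = S.r b * S.r a * (S.r b)⁻¹ := by
  ext x
  obtain ⟨w, rfl⟩ := (S.r b).surjective x
  rw [Equiv.Perm.mul_apply, Equiv.Perm.mul_apply, Equiv.Perm.coe_inv, Equiv.symm_apply_apply]
  exact (S.op_distrib w a b).symm

lemma r_pow_apply (i x : Q) (d : ℕ) :
    S.r ((S.r i ^ d) x) = S.r i ^ d * S.r x * (S.r i ^ d)⁻¹ := by
  induction d with
  | zero => simp
  | succ d ih =>
    rw [pow_succ', Equiv.Perm.mul_apply, r_apply, r_op, ih]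
    group

lemma commute_r_pow_r_op {i x y : Q} {d : ℕ} (hd : (S.r i ^ d) x = y)
    (hxy : S.op i x = S.op i y) : Commute (S.r i ^ d) (S.r (S.op i x)) := by
  have hconj : S.r (S.op i x) = S.r i ^ d * S.r (S.op i x) * (S.r i ^ d)⁻¹ := by
    conv_lhs => rw [hxy, r_op, ← hd, r_pow_apply]
    rw [r_op]
    group
  exact (eq_mul_inv_iff_mul_eq.mp hconj).symm

lemma eq_of_op_eq_self_of_card_support [Fintype Q] [DecidableEq Q]
    (hcard : ∀ q : Q, (S.r q).support.card = Fintype.card Q - 1) {a q : Q}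
    (h : S.op a q = a) : a = q := by
  have hfixed : ((S.r q).support)ᶜ.card = 1 := by
    rw [Finset.card_compl, hcard q]
    have : 0 < Fintype.card Q := Fintype.card_pos_iff.mpr ⟨q⟩
    omega
  obtain ⟨b, hb⟩ := Finset.card_eq_one.mp hfixed
  have ha : a ∈ ((S.r q).support)ᶜ := by
    simp [r_apply, h]
  have hq : q ∈ ((S.r q).support)ᶜ := by
    simp [r_apply, S.op_self]
  rw [hb, Finset.mem_singleton] at ha hq
  rw [ha, hq]

theorem op_left_injective_of_isCycle [Finite Q] (hfix : ∀ a b : Q, S.op a b = a → a = b)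
    (hcycle : ∀ q : Q, (S.r q).IsCycle) (i : Q) : Function.Injective (S.op i) := by
  intro x y hxy
  by_cases hx : x = i
  · subst hx
    exact hfix x y ((S.op_self x).symm.trans hxy).symm
  by_cases hy : y = i
  · subst hy
    exact (hfix y x (hxy.trans (S.op_self y))).symm
  have hx_moved : S.r i x ≠ x := fun h => hx (hfix x i h)
  obtain ⟨d, hd⟩ := (hcycle i).exists_pow_eq hx_moved (fun h => hy (hfix y i h))
  set z := S.op i x
  have hz_fixed : (S.r i ^ d) z = z := by
    apply hfix
    rw [← r_apply, ← Equiv.Perm.mul_apply, ← (S.commute_r_pow_r_op hd hxy).eq,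
      Equiv.Perm.mul_apply, r_apply, S.op_self]
  have hz_moved : S.r i z ≠ z := fun h => hx (hfix i x (hfix z i h)).symm
  rw [((hcycle i).pow_eq_one_iff' hz_moved).mpr hz_fixed] at hd
  exact hd

end QuandleOp

theorem latin_of_profile_one_cycle_general
    {n : ℕ} (S : QuandleOp (Fin n))
    (hprofile : ∀ q : Fin n, (S.r q).IsCycle ∧ (S.r q).support.card = n - 1) :
    ∀ i : Fin n, Function.Bijective fun x => S.op i x := by
  intro i
  have hfix (a b : Fin n) (h : S.op a b = a) : a = b :=
    S.eq_of_op_eq_self_of_card_support (by simpa using fun q => (hprofile q).2) h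
  exact Finite.injective_iff_bijective.mp
    (S.op_left_injective_of_isCycle hfix (fun q => (hprofile q).1) i)

/-- Theorem 3 of the paper, due to K. Oshiro: a connected quandle
with `n` elements whose profile is `{1, n-1}` (each `r q` is a single cycle of length
`n - 1` together with the fixed point `q`) is latin: every left translation
`l i : x ↦ i * x` is a bijection (equivalently, every row of the quandle matrix
contains all the elements). -/
theorem latin_of_profile_one_cycle
    {n : ℕ} (S : QuandleOp (Fin n)) (hconn : S.Connected)
    (hprofile : ∀ q : Fin n, (S.r q).IsCycle ∧ (S.r q).support.card = n - 1) :
    ∀ i : Fin n, Function.Bijective fun x => S.op i x :=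
  latin_of_profile_one_cycle_general S hprofile
end
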